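/- The two tangent lines at two distinct boundary points meet in a single point lying outside the closed ball. Concretely: let v, w : Fin 3 → ℂ be linearly independent vectors with B(v,v) = 0 and B(w,w) = 0. Then the subspace {u : Fin 3 → ℂ | B(v,u) = 0 ∧ B(w,u) = 0} has complex dimension 1, and every nonzero u in this subspace satisfies Re(B(u,u)) > 0. -/

import Mathlib

open Matrix

/-- The linear functional `w ↦ B(v, w)` for the Hermitian form `B` of signature
(1,2), where `B(v,w) = star v ⬝ᵥ (diagonal ![-1,1,1]).mulVec w`. -/
noncomputable def hermitianForm (v : Fin 3 → ℂ) : (Fin 3 → ℂ) →ₗ[ℂ] ℂ where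
  toFun w := star v ⬝ᵥ (Matrix.diagonal ![-1, 1, 1] : Matrix (Fin 3) (Fin 3) ℂ).mulVec w
  map_add' x y := by simp [Matrix.mulVec_add, dotProduct_add]
  map_smul' c x := by simp [Matrix.mulVec_smul, dotProduct_smul]

/-!
Write `c = B(v, w)`. If `c = 0`, the plane spanned by `v` and `w` would be totally isotropic, yet an
isotropic vector with vanishing first coordinate is zero, and that plane contains one. So `c ≠ 0`,
which makes the functionals `B(v, ·)` and `B(w, ·)` independent, and their common kernel is a line.
The vector `v - c̄ w` has `B = -2 |c|²`, and the `B`-orthogonal complement of a negative vector is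
positive definite: Cauchy–Schwarz in the last two coordinates.
-/

section Dimension

variable {K V : Type*} [Field K] [AddCommGroup V] [Module K V]

theorem LinearMap.prod_surjective_of_dual_pair (f g : V →ₗ[K] K) {x y : V}
    (hfx : f x = 0) (hgx : g x ≠ 0) (hfy : f y ≠ 0) (hgy : g y = 0) :
    Function.Surjective (f.prod g) := by
  rintro ⟨a, b⟩
  refine ⟨(a / f y) • y + (b / g x) • x, ?_⟩
  simp [hfx, hgx, hfy, hgy]

theorem finrank_ker_inf_ker_add_two [FiniteDimensional K V] (f g : V →ₗ[K] K) {x y : V}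
    (hfx : f x = 0) (hgx : g x ≠ 0) (hfy : f y ≠ 0) (hgy : g y = 0) :
    Module.finrank K (LinearMap.ker f ⊓ LinearMap.ker g : Submodule K V) + 2 =
      Module.finrank K V := by
  have hrange : LinearMap.range (f.prod g) = ⊤ :=
    LinearMap.range_eq_top.mpr (f.prod_surjective_of_dual_pair g hfx hgx hfy hgy)
  have := LinearMap.finrank_range_add_finrank_ker (f.prod g)
  rw [hrange, finrank_top, LinearMap.ker_prod, Module.finrank_prod, Module.finrank_self] at this
  omega

end Dimension

namespace hermitianForm

open ComplexConjugate

theorem apply (x y : Fin 3 → ℂ) :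
    hermitianForm x y = -(conj (x 0) * y 0) + conj (x 1) * y 1 + conj (x 2) * y 2 := by
  simp [hermitianForm, dotProduct, Matrix.mulVec_diagonal, Fin.sum_univ_three, Pi.star_apply,
    RCLike.star_def]

theorem conj_apply (x y : Fin 3 → ℂ) : conj (hermitianForm x y) = hermitianForm y x := by
  simp only [apply, map_add, map_neg, map_mul, Complex.conj_conj]
  ring

theorem sub_left (x y : Fin 3 → ℂ) : hermitianForm (x - y) = hermitianForm x - hermitianForm y := by
  refine LinearMap.ext fun z => ?_
  simp only [LinearMap.sub_apply, apply, Pi.sub_apply, map_sub]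
  ring

theorem smul_left (a : ℂ) (x : Fin 3 → ℂ) : hermitianForm (a • x) = conj a • hermitianForm x := by
  refine LinearMap.ext fun z => ?_
  simp only [LinearMap.smul_apply, apply, Pi.smul_apply, smul_eq_mul, map_mul]
  ring

theorem re_apply_self (x : Fin 3 → ℂ) :
    (hermitianForm x x).re = -‖x 0‖ ^ 2 + ‖x 1‖ ^ 2 + ‖x 2‖ ^ 2 := by
  simp only [apply, Complex.conj_mul']
  norm_cast

theorem eq_zero_of_isotropic_of_coord_zero {x : Fin 3 → ℂ} (hx : hermitianForm x x = 0)
    (h0 : x 0 = 0) : x = 0 := by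
  have hre := re_apply_self x
  rw [hx, h0, Complex.zero_re, norm_zero] at hre
  have h1 : x 1 = 0 := by rw [← norm_eq_zero]; nlinarith [norm_nonneg (x 1), norm_nonneg (x 2)]
  have h2 : x 2 = 0 := by rw [← norm_eq_zero]; nlinarith [norm_nonneg (x 1), norm_nonneg (x 2)]
  ext i
  fin_cases i <;> assumption

theorem apply_ne_zero_of_isotropic {v w : Fin 3 → ℂ} (hvw : LinearIndependent ℂ ![v, w])
    (hv : hermitianForm v v = 0) (hw : hermitianForm w w = 0) : hermitianForm v w ≠ 0 := by
  intro hc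
  have hc' : hermitianForm w v = 0 := by rw [← conj_apply, hc, map_zero]
  set z := w 0 • v - v 0 • w
  have hzz : hermitianForm z z = 0 := by
    simp [z, sub_left, smul_left, hv, hw, hc, hc']
  have hz0 : z 0 = 0 := by simp [z, mul_comm]
  obtain ⟨-, hv0⟩ := LinearIndependent.pair_iff.mp hvw (w 0) (-v 0) (by
    rw [neg_smul, ← sub_eq_add_neg]; exact eq_zero_of_isotropic_of_coord_zero hzz hz0)
  exact hvw.ne_zero 0 (eq_zero_of_isotropic_of_coord_zero hv (neg_eq_zero.mp hv0))

theorem re_apply_self_pos_of_orthogonal_neg {x u : Fin 3 → ℂ} (hx : (hermitianForm x x).re < 0)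
    (hxu : hermitianForm x u = 0) (hu : u ≠ 0) : 0 < (hermitianForm u u).re := by
  rw [re_apply_self] at hx ⊢
  have hcs : ‖x 0‖ * ‖u 0‖ ≤ ‖x 1‖ * ‖u 1‖ + ‖x 2‖ * ‖u 2‖ := by
    have h : conj (x 0) * u 0 = conj (x 1) * u 1 + conj (x 2) * u 2 := by
      rw [apply] at hxu; linear_combination -hxu
    calc ‖x 0‖ * ‖u 0‖ = ‖conj (x 1) * u 1 + conj (x 2) * u 2‖ := by
          rw [← h, norm_mul, Complex.norm_conj]
      _ ≤ ‖x 1‖ * ‖u 1‖ + ‖x 2‖ * ‖u 2‖ := by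
          simpa only [norm_mul, Complex.norm_conj] using
            norm_add_le (conj (x 1) * u 1) (conj (x 2) * u 2)
  have hx0 : 0 < ‖x 0‖ := by nlinarith [norm_nonneg (x 1), norm_nonneg (x 2), norm_nonneg (x 0)]
  have htail : 0 < ‖u 1‖ ^ 2 + ‖u 2‖ ^ 2 := by
    by_contra! h
    have h1 : u 1 = 0 := by rw [← norm_eq_zero]; nlinarith [norm_nonneg (u 1), norm_nonneg (u 2)]
    have h2 : u 2 = 0 := by rw [← norm_eq_zero]; nlinarith [norm_nonneg (u 1), norm_nonneg (u 2)]
    have h0 : u 0 = 0 := by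
      rw [h1, h2, norm_zero, mul_zero, mul_zero, add_zero] at hcs
      rw [← norm_eq_zero]; nlinarith [norm_nonneg (u 0)]
    exact hu (by ext i; fin_cases i <;> assumption)
  have hsq : (‖x 0‖ * ‖u 0‖) ^ 2 ≤ (‖x 1‖ ^ 2 + ‖x 2‖ ^ 2) * (‖u 1‖ ^ 2 + ‖u 2‖ ^ 2) :=
    calc (‖x 0‖ * ‖u 0‖) ^ 2 ≤ (‖x 1‖ * ‖u 1‖ + ‖x 2‖ * ‖u 2‖) ^ 2 :=
          pow_le_pow_left₀ (by positivity) hcs 2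
      _ ≤ _ := by nlinarith [sq_nonneg (‖x 1‖ * ‖u 2‖ - ‖x 2‖ * ‖u 1‖)]
  nlinarith [mul_lt_mul_of_pos_right (show ‖x 1‖ ^ 2 + ‖x 2‖ ^ 2 < ‖x 0‖ ^ 2 by linarith) htail]

theorem re_apply_self_neg_of_isotropic {v w : Fin 3 → ℂ} (hv : hermitianForm v v = 0)
    (hw : hermitianForm w w = 0) (hc : hermitianForm v w ≠ 0) :
    (hermitianForm (v - conj (hermitianForm v w) • w)
      (v - conj (hermitianForm v w) • w)).re < 0 := by
  set c := hermitianForm v w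
  have hwv : hermitianForm w v = conj c := (conj_apply v w).symm
  have h : hermitianForm (v - conj c • w) (v - conj c • w) = ((-2 * ‖c‖ ^ 2 : ℝ) : ℂ) := by
    simp only [sub_left, smul_left, map_sub, map_smul, LinearMap.sub_apply, LinearMap.smul_apply,
      hv, hw, hwv, c, Complex.conj_conj, smul_eq_mul]
    push_cast
    linear_combination (-2 : ℂ) * Complex.mul_conj' c
  rw [h, Complex.ofReal_re]
  have : 0 < ‖c‖ := norm_pos_iff.mpr hc
  nlinarith

end hermitianForm

/-- The tangent lines at two distinct boundary points meet in a single point,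
which lies outside the closed ball. -/
theorem tangent_lines_meet_outside_ball (v w : Fin 3 → ℂ)
    (hvw : LinearIndependent ℂ ![v, w])
    (hv : star v ⬝ᵥ (Matrix.diagonal ![-1, 1, 1] : Matrix (Fin 3) (Fin 3) ℂ).mulVec v = 0)
    (hw : star w ⬝ᵥ (Matrix.diagonal ![-1, 1, 1] : Matrix (Fin 3) (Fin 3) ℂ).mulVec w = 0) :
    Module.finrank ℂ (LinearMap.ker (hermitianForm v) ⊓ LinearMap.ker (hermitianForm w) :
      Submodule ℂ (Fin 3 → ℂ)) = 1 ∧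
    ∀ u ∈ LinearMap.ker (hermitianForm v) ⊓ LinearMap.ker (hermitianForm w), u ≠ 0 →
      0 < (star u ⬝ᵥ (Matrix.diagonal ![-1, 1, 1] : Matrix (Fin 3) (Fin 3) ℂ).mulVec u).re := by
  change hermitianForm v v = 0 at hv
  change hermitianForm w w = 0 at hw
  have hc := hermitianForm.apply_ne_zero_of_isotropic hvw hv hw
  have hc' : hermitianForm w v ≠ 0 := by rwa [← hermitianForm.conj_apply, map_ne_zero]
  refine ⟨?_, fun u hu hu0 => ?_⟩
  · have := finrank_ker_inf_ker_add_two (hermitianForm v) (hermitianForm w) hv hc' hc hw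
    rw [Module.finrank_fin_fun] at this
    omega
  · obtain ⟨hvu, hwu⟩ := Submodule.mem_inf.mp hu
    refine hermitianForm.re_apply_self_pos_of_orthogonal_neg
      (hermitianForm.re_apply_self_neg_of_isotropic hv hw hc) ?_ hu0
    simp only [hermitianForm.sub_left, hermitianForm.smul_left, LinearMap.sub_apply,
      LinearMap.smul_apply, LinearMap.mem_ker.mp hvu, LinearMap.mem_ker.mp hwu, smul_zero, sub_zero]
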